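/- Any two P-bases of a finitely generated P-closed set Ω ⊆ 𝔽ⁿ are finite and have the same number of elements. -/

import Mathlib

/- Common setup: free multivariate skew polynomial rings over a division ring. -/

open Matrix Finsupp

/-- The underlying left `𝔽`-module of the free multivariate skew polynomial ring:
the free left `𝔽`-module with basis the free monoid on `n` symbols. -/
abbrev SkewPoly (𝔽 : Type*) [DivisionRing 𝔽] (n : ℕ) : Type _ := FreeMonoid (Fin n) →₀ 𝔽

namespace SkewPoly

variable {𝔽 : Type*} [DivisionRing 𝔽] {n : ℕ}

/-- The variable `xᵢ` as a skew polynomial. -/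
noncomputable def X (𝔽 : Type*) [DivisionRing 𝔽] {n : ℕ} (i : Fin n) : SkewPoly 𝔽 n :=
  Finsupp.single (FreeMonoid.of i) 1

/-- The constant `a` as a skew polynomial (coefficient on the empty word). -/
noncomputable def C {𝔽 : Type*} [DivisionRing 𝔽] (n : ℕ) (a : 𝔽) :
    SkewPoly 𝔽 n := Finsupp.single 1 a

/-- The degree of a skew polynomial: the maximal length of a word in its support
(`⊥` for the zero polynomial). -/
noncomputable def deg (F : SkewPoly 𝔽 n) : WithBot ℕ :=
  F.support.sup fun m => ((FreeMonoid.length m : ℕ) : WithBot ℕ)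

/-- A matrix morphism `σ : 𝔽 → Mₙ(𝔽)`: a unital ring homomorphism. -/
def IsMatrixMorphism (σ : 𝔽 → Matrix (Fin n) (Fin n) 𝔽) : Prop :=
  σ 1 = 1 ∧ (∀ a b : 𝔽, σ (a + b) = σ a + σ b) ∧ (∀ a b : 𝔽, σ (a * b) = σ a * σ b)

/-- A `σ`-vector derivation `δ : 𝔽 → 𝔽ⁿ`: additive with `δ(ab) = σ(a)δ(b) + δ(a)b`. -/
def IsVectorDerivation (σ : 𝔽 → Matrix (Fin n) (Fin n) 𝔽) (δ : 𝔽 → Fin n → 𝔽) : Prop :=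
  (∀ a b : 𝔽, δ (a + b) = δ a + δ b) ∧
    (∀ a b : 𝔽, δ (a * b) = σ a *ᵥ δ b + fun i => δ a i * b)

/-- A multiplication on the free module `SkewPoly 𝔽 n` making it a ring (with the
existing addition) whose identity is the empty word, which restricts to concatenation
on monomials, is additive on degrees of nonzero elements, and for which left
multiplication by constants is scalar multiplication. -/
structure RawMul (𝔽 : Type*) [DivisionRing 𝔽] (n : ℕ) where
  /-- the multiplication -/
  mul : SkewPoly 𝔽 n → SkewPoly 𝔽 n → SkewPoly 𝔽 n
  mul_add : ∀ F G H : SkewPoly 𝔽 n, mul F (G + H) = mul F G + mul F H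
  add_mul : ∀ F G H : SkewPoly 𝔽 n, mul (F + G) H = mul F H + mul G H
  mul_assoc : ∀ F G H : SkewPoly 𝔽 n, mul (mul F G) H = mul F (mul G H)
  one_mul : ∀ F : SkewPoly 𝔽 n, mul (C n 1) F = F
  mul_one : ∀ F : SkewPoly 𝔽 n, mul F (C n 1) = F
  mono_mul_mono : ∀ m m' : FreeMonoid (Fin n),
    mul (Finsupp.single m 1) (Finsupp.single m' 1) = Finsupp.single (m * m') 1
  const_mul : ∀ (a : 𝔽) (F : SkewPoly 𝔽 n), mul (C n a) F = a • F
  deg_mul : ∀ F G : SkewPoly 𝔽 n, F ≠ 0 → G ≠ 0 → deg (mul F G) = deg F + deg G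

/-- The multiplication `S` satisfies the commutation rule
`xᵢ a = Σⱼ σ_{i,j}(a) xⱼ + δᵢ(a)`. -/
def HasCommRule (S : RawMul 𝔽 n) (σ : 𝔽 → Matrix (Fin n) (Fin n) 𝔽)
    (δ : 𝔽 → Fin n → 𝔽) : Prop :=
  ∀ (i : Fin n) (a : 𝔽),
    S.mul (X 𝔽 i) (C n a) =
      (∑ j : Fin n, Finsupp.single (FreeMonoid.of j) (σ a i j)) + C n (δ a i)

/-- `F = Σᵢ Gᵢ (xᵢ - aᵢ) + b`, i.e. `b` is a remainder of `F` upon right division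
by `x₁ - a₁, …, xₙ - aₙ`; equivalently `F - b` lies in the left ideal generated by
the `xᵢ - aᵢ`. -/
def Decomposes (S : RawMul 𝔽 n) (a : Fin n → 𝔽) (F : SkewPoly 𝔽 n) (b : 𝔽) : Prop :=
  ∃ G : Fin n → SkewPoly 𝔽 n,
    F = (∑ i : Fin n, S.mul (G i) (X 𝔽 i - C n (a i))) + C n b

/-- The evaluation of `F` at the point `a`: the unique `b ∈ 𝔽` such that `F - b`
lies in the left ideal generated by `x₁ - a₁, …, xₙ - aₙ`. -/
noncomputable def eval (S : RawMul 𝔽 n) (a : Fin n → 𝔽) (F : SkewPoly 𝔽 n) : 𝔽 :=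
  letI := Classical.propDecidable (∃ b : 𝔽, Decomposes S a F b)
  if h : ∃ b : 𝔽, Decomposes S a F b then h.choose else 0

/-- The `(σ,δ)`-conjugate `a^c = σ(c) a c⁻¹ + δ(c) c⁻¹` of `a` with respect to `c`. -/
noncomputable def conj (σ : 𝔽 → Matrix (Fin n) (Fin n) 𝔽) (δ : 𝔽 → Fin n → 𝔽)
    (a : Fin n → 𝔽) (c : 𝔽) : Fin n → 𝔽 :=
  fun i => (σ c *ᵥ a) i * c⁻¹ + δ c i * c⁻¹

/-- `I(Ω)`: the set of skew polynomials vanishing at every point of `Ω`. -/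
def zeroIdeal (S : RawMul 𝔽 n) (Ω : Set (Fin n → 𝔽)) : Set (SkewPoly 𝔽 n) :=
  {F | ∀ a ∈ Ω, eval S a F = 0}

/-- The left ideal of `SkewPoly 𝔽 n` generated by `x₁ - a₁, …, xₙ - aₙ`
(the set of sums of left multiples of the generators). -/
def pointIdeal (S : RawMul 𝔽 n) (a : Fin n → 𝔽) : Set (SkewPoly 𝔽 n) :=
  {F | ∃ G : Fin n → SkewPoly 𝔽 n, F = ∑ i : Fin n, S.mul (G i) (X 𝔽 i - C n (a i))}

/-- The P-closure `Ω̄ = Z(I(Ω))` of a set of points `Ω`. -/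
def pClosure (S : RawMul 𝔽 n) (Ω : Set (Fin n → 𝔽)) : Set (Fin n → 𝔽) :=
  {a | ∀ F ∈ zeroIdeal S Ω, eval S a F = 0}

/-- `Ω` is P-closed if it equals its P-closure. -/
def IsPClosed (S : RawMul 𝔽 n) (Ω : Set (Fin n → 𝔽)) : Prop := pClosure S Ω = Ω

/-- `B` is P-independent: no point of `B` lies in the P-closure of the rest. -/
def PIndep (S : RawMul 𝔽 n) (B : Set (Fin n → 𝔽)) : Prop :=
  ∀ a ∈ B, a ∉ pClosure S (B \ {a})

/-- `B` is a P-basis of `Ω`: a P-independent subset of `Ω` whose P-closure is `Ω`. -/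
def IsPBasis (S : RawMul 𝔽 n) (B Ω : Set (Fin n → 𝔽)) : Prop :=
  B ⊆ Ω ∧ PIndep S B ∧ pClosure S B = Ω

/-- `Ω` is finitely generated: it is the P-closure of a finite subset of itself. -/
def FinGen (S : RawMul 𝔽 n) (Ω : Set (Fin n → 𝔽)) : Prop :=
  ∃ G : Set (Fin n → 𝔽), G.Finite ∧ G ⊆ Ω ∧ pClosure S G = Ω

/-- The rank of a P-closed set: the (common) cardinality of its P-bases. -/
noncomputable def pRank (S : RawMul 𝔽 n) (Ω : Set (Fin n → 𝔽)) : ℕ :=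
  sInf {k : ℕ | ∃ B : Finset (Fin n → 𝔽), IsPBasis S ↑B Ω ∧ B.card = k}

/-- The image of the evaluation map `E_Ω : R → 𝔽^Ω`, as a left `𝔽`-subspace of `𝔽^Ω`
(the span of the image; the image is itself a subspace since evaluation is left linear). -/
noncomputable def evalSpan (S : RawMul 𝔽 n) (Ω : Set (Fin n → 𝔽)) :
    Submodule 𝔽 (↥Ω → 𝔽) :=
  Submodule.span 𝔽 (Set.range fun F : SkewPoly 𝔽 n => fun a : ↥Ω => eval S ↑a F)

/-- `I` is a two-sided ideal with respect to the multiplication `S`. -/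
def IsTwoSidedIdealSet (S : RawMul 𝔽 n) (I : Set (SkewPoly 𝔽 n)) : Prop :=
  (0 : SkewPoly 𝔽 n) ∈ I ∧ (∀ F ∈ I, ∀ G ∈ I, F + G ∈ I) ∧ (∀ F ∈ I, -F ∈ I) ∧
    (∀ F ∈ I, ∀ G : SkewPoly 𝔽 n, S.mul G F ∈ I) ∧
    (∀ F ∈ I, ∀ G : SkewPoly 𝔽 n, S.mul F G ∈ I)


/-- The left row-rank of the skew Vandermonde matrix `V_d(G)`: the dimension of the
left `𝔽`-span of its rows `(N_m(c))_{c ∈ G}`, indexed by the words `m` of length `< d`,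
where `N_m(c)` is the evaluation of the monomial `m` at the point `c`. -/
noncomputable def vandermondeRank (S : RawMul 𝔽 n) (G : Finset (Fin n → 𝔽)) (d : ℕ) :
    Cardinal :=
  Module.rank 𝔽 ↥(Submodule.span 𝔽 (Set.range
    fun m : {m : FreeMonoid (Fin n) // FreeMonoid.length m < d} =>
      fun c : ↥G => eval S ↑c (Finsupp.single (m : FreeMonoid (Fin n)) (1 : 𝔽))))

end SkewPoly

open SkewPoly

/-!
Evaluation at a point `a` is a left `𝔽`-linear map `R → 𝔽`: the commutation rule lets one reduce
every polynomial modulo `x₁ - a₁, …, xₙ - aₙ` to a constant, and the constant is unique because a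
nonzero combination `Σ Gᵢ (xᵢ - aᵢ)` contains a word `m xᵢ` longer than every word of `Σ Gᵢ aᵢ`.

For a finite set `A` let `E_A : R → 𝔽^A` be evaluation on `A`; its image has dimension at most
`|A|`. If `B` lies in the P-closure of `A`, a polynomial vanishing on `A` vanishes on `B`, so
`ker E_A ≤ ker E_B` and `dim im E_B ≤ dim im E_A`. If `B` is moreover P-independent, `E_B` is onto:
for each `b ∈ B` some polynomial vanishes on `B ∖ {b}` but not at `b`. Hence a P-independent subset
of the P-closure of a finite set `A` has at most `|A|` points. Applied to a finite generating set
this shows that P-bases are finite, and applied to two P-bases against each other it shows that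
they have the same size.
-/

theorem LinearMap.finrank_range_le_of_ker_le {K M V W : Type*} [DivisionRing K]
    [AddCommGroup M] [Module K M] [AddCommGroup V] [Module K V] [FiniteDimensional K V]
    [AddCommGroup W] [Module K W] {f : M →ₗ[K] V} {g : M →ₗ[K] W} (h : ker f ≤ ker g) :
    Module.finrank K (range g) ≤ Module.finrank K (range f) := by
  have : FiniteDimensional K (M ⧸ ker f) := f.quotKerEquivRange.symm.finiteDimensional
  rw [← g.quotKerEquivRange.finrank_eq, ← f.quotKerEquivRange.finrank_eq]
  exact LinearMap.finrank_le_finrank_of_surjective (Submodule.factor_surjective h)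

namespace SkewPoly

variable {𝔽 : Type*} [DivisionRing 𝔽] {n : ℕ}

namespace RawMul

variable (S : RawMul 𝔽 n)

noncomputable def mulLeft (F : SkewPoly 𝔽 n) : SkewPoly 𝔽 n →+ SkewPoly 𝔽 n :=
  AddMonoidHom.mk' (S.mul F) (S.mul_add F)

noncomputable def mulRight (G : SkewPoly 𝔽 n) : SkewPoly 𝔽 n →+ SkewPoly 𝔽 n :=
  AddMonoidHom.mk' (S.mul · G) fun F F' => S.add_mul F F' G

lemma mul_zero (F : SkewPoly 𝔽 n) : S.mul F 0 = 0 := map_zero (S.mulLeft F)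

lemma zero_mul (G : SkewPoly 𝔽 n) : S.mul 0 G = 0 := map_zero (S.mulRight G)

lemma mul_sub (F G H : SkewPoly 𝔽 n) : S.mul F (G - H) = S.mul F G - S.mul F H :=
  map_sub (S.mulLeft F) G H

lemma sub_mul (F G H : SkewPoly 𝔽 n) : S.mul (F - G) H = S.mul F H - S.mul G H :=
  map_sub (S.mulRight H) F G

lemma mul_sum {ι : Type*} (F : SkewPoly 𝔽 n) (s : Finset ι) (G : ι → SkewPoly 𝔽 n) :
    S.mul F (∑ i ∈ s, G i) = ∑ i ∈ s, S.mul F (G i) :=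
  map_sum (S.mulLeft F) G s

lemma smul_mul (c : 𝔽) (F G : SkewPoly 𝔽 n) : S.mul (c • F) G = c • S.mul F G := by
  rw [← S.const_mul, S.mul_assoc, S.const_mul]

lemma mul_X (G : SkewPoly 𝔽 n) (i : Fin n) :
    S.mul G (X 𝔽 i) = Finsupp.mapDomain (· * FreeMonoid.of i) G := by
  induction G using Finsupp.induction_linear with
  | zero => rw [S.zero_mul, Finsupp.mapDomain_zero]
  | add F G hF hG => rw [S.add_mul, hF, hG, Finsupp.mapDomain_add]
  | single m c =>
    rw [← Finsupp.smul_single_one, S.smul_mul, X, S.mono_mul_mono, Finsupp.mapDomain_smul,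
      Finsupp.mapDomain_single]

lemma exists_length_le_of_mem_support_mul_C {G : SkewPoly 𝔽 n} {c : 𝔽}
    {w : FreeMonoid (Fin n)} (hw : w ∈ (S.mul G (C n c)).support) :
    ∃ m ∈ G.support, w.length ≤ m.length := by
  have hc : c ≠ 0 := by rintro rfl; simp [C, S.mul_zero] at hw
  have hG : G ≠ 0 := by rintro rfl; simp [S.zero_mul] at hw
  have hdegC : deg (C n c) = 0 := by simp [deg, C, hc]
  have hdeg : deg (S.mul G (C n c)) = deg G := by
    rw [S.deg_mul G _ hG (by simpa [C] using hc), hdegC, add_zero]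
  have hw' : (w.length : WithBot ℕ) ≤ deg G :=
    hdeg ▸ Finset.le_sup (f := fun m => ((FreeMonoid.length m : ℕ) : WithBot ℕ)) hw
  obtain ⟨m, hm, hle⟩ := (Finset.le_sup_iff (WithBot.bot_lt_coe _)).1 hw'
  exact ⟨m, hm, WithBot.coe_le_coe.1 hle⟩

lemma sum_mul_X_apply (G : Fin n → SkewPoly 𝔽 n) (m : FreeMonoid (Fin n)) (j : Fin n) :
    (∑ i, S.mul (G i) (X 𝔽 i)) (m * FreeMonoid.of j) = G j m := by
  rw [Finsupp.finsetSum_apply, Finset.sum_eq_single j]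
  · rw [S.mul_X, Finsupp.mapDomain_apply (mul_left_injective _)]
  · intro i _ hij
    rw [S.mul_X, Finsupp.mapDomain_of_notMem_range]
    rintro ⟨m', hm'⟩
    have := congrArg (fun w => (FreeMonoid.toList w).getLast?) hm'
    simp only [FreeMonoid.toList_mul, FreeMonoid.toList_of, List.getLast?_append,
      List.getLast?_singleton, Option.some_or, Option.some.injEq] at this
    exact hij this
  · simp

lemma sum_mul_C_apply_eq_zero (G : Fin n → SkewPoly 𝔽 n) (a : Fin n → 𝔽)
    {w : FreeMonoid (Fin n)} (hw : ∀ i, ∀ m ∈ (G i).support, m.length < w.length) :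
    (∑ i, S.mul (G i) (C n (a i))) w = 0 := by
  rw [Finsupp.finsetSum_apply]
  refine Finset.sum_eq_zero fun i _ => Finsupp.notMem_support_iff.1 fun hmem => ?_
  obtain ⟨m, hm, hle⟩ := S.exists_length_le_of_mem_support_mul_C hmem
  exact (hw i m hm).not_ge hle

theorem eq_zero_of_C_mem_pointIdeal {a : Fin n → 𝔽} {d : 𝔽} (h : C n d ∈ pointIdeal S a) :
    d = 0 := by
  obtain ⟨G, hG⟩ := h
  by_cases hGz : ∀ i, G i = 0
  · simpa [hGz, S.zero_mul, C] using hG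
  obtain ⟨j, hj⟩ := not_forall.1 hGz
  obtain ⟨⟨i₀, m₀⟩, hmem, hmax⟩ := (Finset.univ.sigma fun i => (G i).support).exists_max_image
    (fun p => p.2.length) ⟨⟨j, _⟩, Finset.mem_sigma.2 ⟨Finset.mem_univ j,
      (Finsupp.support_nonempty_iff.2 hj).choose_spec⟩⟩
  have hsplit : ∑ i, S.mul (G i) (X 𝔽 i) = C n d + ∑ i, S.mul (G i) (C n (a i)) := by
    simp only [S.mul_sub, Finset.sum_sub_distrib] at hG
    exact sub_eq_iff_eq_add.1 hG.symm
  have hlong : ∀ i, ∀ m ∈ (G i).support, m.length < (m₀ * FreeMonoid.of i₀).length := by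
    intro i m hm
    have := hmax ⟨i, m⟩ (Finset.mem_sigma.2 ⟨Finset.mem_univ i, hm⟩)
    simp only [FreeMonoid.length_mul, FreeMonoid.length_of] at this ⊢
    omega
  have hcoeff := congrArg (· (m₀ * FreeMonoid.of i₀)) hsplit
  simp only [S.sum_mul_X_apply, Finsupp.add_apply, S.sum_mul_C_apply_eq_zero G a hlong,
    add_zero] at hcoeff
  rw [C, Finsupp.single_eq_of_ne (fun h => by simpa using congrArg FreeMonoid.length h)]
    at hcoeff
  exact absurd hcoeff (Finsupp.mem_support_iff.1 (Finset.mem_sigma.1 hmem).2)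

end RawMul

section Evaluation

variable {S : RawMul 𝔽 n} {σ : 𝔽 → Matrix (Fin n) (Fin n) 𝔽} {δ : 𝔽 → Fin n → 𝔽}
  {a : Fin n → 𝔽}

lemma decomposes_C (b : 𝔽) : Decomposes S a (C n b) b :=
  ⟨0, by simp [S.zero_mul]⟩

lemma Decomposes.add {F F' : SkewPoly 𝔽 n} {b b' : 𝔽} (h : Decomposes S a F b)
    (h' : Decomposes S a F' b') : Decomposes S a (F + F') (b + b') := by
  obtain ⟨G, rfl⟩ := h
  obtain ⟨G', rfl⟩ := h'
  refine ⟨G + G', ?_⟩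
  simp only [Pi.add_apply, S.add_mul, Finset.sum_add_distrib, C, Finsupp.single_add]
  abel

lemma Decomposes.smul {F : SkewPoly 𝔽 n} {b : 𝔽} (c : 𝔽) (h : Decomposes S a F b) :
    Decomposes S a (c • F) (c * b) := by
  obtain ⟨G, rfl⟩ := h
  refine ⟨c • G, ?_⟩
  simp only [Pi.smul_apply, S.smul_mul, smul_add, Finset.smul_sum, C, Finsupp.smul_single,
    smul_eq_mul]

/-- Right division of `xᵢ F` by the `xⱼ - aⱼ`: since `xᵢ b = Σⱼ σᵢⱼ(b) xⱼ + δᵢ(b)`, the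
remainder `b` of `F` becomes `Σⱼ σᵢⱼ(b) aⱼ + δᵢ(b)`. -/
lemma Decomposes.X_mul (hS : HasCommRule S σ δ) {F : SkewPoly 𝔽 n} {b : 𝔽} (i : Fin n)
    (h : Decomposes S a F b) :
    Decomposes S a (S.mul (X 𝔽 i) F) ((∑ j, σ b i j * a j) + δ b i) := by
  obtain ⟨G, rfl⟩ := h
  refine ⟨fun j => S.mul (X 𝔽 i) (G j) + C n (σ b i j), ?_⟩
  have hterm : ∀ j, S.mul (S.mul (X 𝔽 i) (G j) + C n (σ b i j)) (X 𝔽 j - C n (a j)) =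
      S.mul (X 𝔽 i) (S.mul (G j) (X 𝔽 j - C n (a j))) +
        (Finsupp.single (FreeMonoid.of j) (σ b i j) - C n (σ b i j * a j)) := by
    intro j
    rw [S.add_mul, ← S.mul_assoc, S.const_mul, smul_sub]
    simp [X, C, Finsupp.smul_single]
  rw [S.mul_add, S.mul_sum, hS i b]
  simp only [hterm, Finset.sum_add_distrib, Finset.sum_sub_distrib]
  simp only [C, Finsupp.single_add, Finsupp.single_finsetSum]
  abel

lemma exists_decomposes (hS : HasCommRule S σ δ) (a : Fin n → 𝔽) (F : SkewPoly 𝔽 n) :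
    ∃ b, Decomposes S a F b := by
  have hmonomial : ∀ m : FreeMonoid (Fin n), ∃ b, Decomposes S a (Finsupp.single m 1) b := by
    intro m
    induction m using FreeMonoid.recOn with
    | one => exact ⟨1, decomposes_C 1⟩
    | of_mul i m ih =>
      obtain ⟨b, hb⟩ := ih
      exact ⟨_, S.mono_mul_mono _ _ ▸ hb.X_mul hS i⟩
  induction F using Finsupp.induction_linear with
  | zero => exact ⟨0, by simpa [C] using decomposes_C (S := S) (a := a) 0⟩
  | add F G hF hG =>
    obtain ⟨b, hb⟩ := hF
    obtain ⟨b', hb'⟩ := hG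
    exact ⟨_, hb.add hb'⟩
  | single m c =>
    obtain ⟨b, hb⟩ := hmonomial m
    exact ⟨_, Finsupp.smul_single_one m c ▸ hb.smul c⟩

lemma Decomposes.unique {F : SkewPoly 𝔽 n} {b b' : 𝔽} (h : Decomposes S a F b)
    (h' : Decomposes S a F b') : b = b' := by
  obtain ⟨G, rfl⟩ := h
  obtain ⟨G', hG'⟩ := h'
  refine sub_eq_zero.1 (S.eq_zero_of_C_mem_pointIdeal (a := a) ⟨G' - G, ?_⟩)
  simp only [Pi.sub_apply, S.sub_mul, Finset.sum_sub_distrib, C, Finsupp.single_sub]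
  rw [sub_eq_sub_iff_add_eq_add, add_comm]
  exact hG'

lemma decomposes_eval (hS : HasCommRule S σ δ) (a : Fin n → 𝔽) (F : SkewPoly 𝔽 n) :
    Decomposes S a F (eval S a F) := by
  have h := exists_decomposes hS a F
  rw [eval, dif_pos h]
  exact h.choose_spec

lemma eval_eq_of_decomposes (hS : HasCommRule S σ δ) {F : SkewPoly 𝔽 n} {b : 𝔽}
    (h : Decomposes S a F b) : eval S a F = b :=
  (decomposes_eval hS a F).unique h

noncomputable def evalMap (hS : HasCommRule S σ δ) (A : Set (Fin n → 𝔽)) :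
    SkewPoly 𝔽 n →ₗ[𝔽] (A → 𝔽) where
  toFun F c := eval S c F
  map_add' F G := funext fun c =>
    eval_eq_of_decomposes hS ((decomposes_eval hS c F).add (decomposes_eval hS c G))
  map_smul' c F := funext fun x => eval_eq_of_decomposes hS ((decomposes_eval hS x F).smul c)

@[simp]
lemma evalMap_apply (hS : HasCommRule S σ δ) (A : Set (Fin n → 𝔽)) (F : SkewPoly 𝔽 n) (c : A) :
    evalMap hS A F c = eval S c F :=
  rfl

end Evaluation

section PIndep

variable {S : RawMul 𝔽 n} {σ : 𝔽 → Matrix (Fin n) (Fin n) 𝔽} {δ : 𝔽 → Fin n → 𝔽}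

lemma pClosure_mono {A B : Set (Fin n → 𝔽)} (h : A ⊆ B) : pClosure S A ⊆ pClosure S B :=
  fun _ hc F hF => hc F fun a ha => hF a (h ha)

lemma PIndep.mono {A B : Set (Fin n → 𝔽)} (hB : PIndep S B) (hAB : A ⊆ B) : PIndep S A :=
  fun a ha hcl => hB a (hAB ha) (pClosure_mono (Set.sdiff_subset_sdiff_left hAB) hcl)

lemma ker_evalMap_le_of_subset_pClosure (hS : HasCommRule S σ δ) {A B : Set (Fin n → 𝔽)}
    (h : B ⊆ pClosure S A) : LinearMap.ker (evalMap hS A) ≤ LinearMap.ker (evalMap hS B) :=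
  fun F hF => funext fun b => h b.2 F fun a ha => congrFun hF ⟨a, ha⟩

lemma PIndep.range_evalMap_eq_top (hS : HasCommRule S σ δ) {B : Finset (Fin n → 𝔽)}
    (hB : PIndep S ↑B) : LinearMap.range (evalMap hS ↑B) = ⊤ := by
  classical
  rw [eq_top_iff, ← (Pi.basisFun 𝔽 ↑(B : Set (Fin n → 𝔽))).span_eq, Submodule.span_le]
  rintro _ ⟨b, rfl⟩
  obtain ⟨F, hF, hFb⟩ : ∃ F ∈ zeroIdeal S (↑B \ {b.1}), eval S b F ≠ 0 := by
    simpa [pClosure] using hB b b.2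
  refine ⟨(eval S b F)⁻¹ • F, funext fun c => ?_⟩
  rw [map_smul, Pi.smul_apply, Pi.basisFun_apply, Pi.single_apply, smul_eq_mul]
  by_cases hcb : c = b
  · rw [hcb, if_pos rfl, evalMap_apply, inv_mul_cancel₀ hFb]
  · rw [if_neg hcb, evalMap_apply, hF c ⟨c.2, fun h => hcb (Subtype.ext h)⟩, mul_zero]

theorem PIndep.card_le_card (hS : HasCommRule S σ δ) {A B : Finset (Fin n → 𝔽)}
    (hB : PIndep S ↑B) (hBA : (↑B : Set (Fin n → 𝔽)) ⊆ pClosure S ↑A) : B.card ≤ A.card :=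
  calc B.card = Module.finrank 𝔽 (LinearMap.range (evalMap hS ↑B)) := by
        rw [hB.range_evalMap_eq_top hS, finrank_top]; simp
    _ ≤ Module.finrank 𝔽 (LinearMap.range (evalMap hS ↑A)) :=
        LinearMap.finrank_range_le_of_ker_le (ker_evalMap_le_of_subset_pClosure hS hBA)
    _ ≤ Module.finrank 𝔽 (↑(A : Set (Fin n → 𝔽)) → 𝔽) := Submodule.finrank_le _
    _ = A.card := by simp

theorem PIndep.finite (hS : HasCommRule S σ δ) {A B : Set (Fin n → 𝔽)} (hB : PIndep S B)
    (hA : A.Finite) (hBA : B ⊆ pClosure S A) : B.Finite := by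
  by_contra hinf
  obtain ⟨t, htB, ht⟩ := Set.Infinite.exists_subset_card_eq hinf (hA.toFinset.card + 1)
  have := (hB.mono htB).card_le_card hS (A := hA.toFinset)
    (by rw [hA.coe_toFinset]; exact htB.trans hBA)
  omega

theorem PIndep.ncard_le (hS : HasCommRule S σ δ) {A B : Set (Fin n → 𝔽)} (hB : PIndep S B)
    (hA : A.Finite) (hBA : B ⊆ pClosure S A) : B.ncard ≤ A.ncard := by
  obtain ⟨s, rfl⟩ := (hB.finite hS hA hBA).exists_finset_coe
  obtain ⟨t, rfl⟩ := hA.exists_finset_coe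
  simpa only [Set.ncard_coe_finset] using hB.card_le_card hS hBA

end PIndep

end SkewPoly

theorem stmt14_general {𝔽 : Type*} [DivisionRing 𝔽] {n : ℕ}
    (σ : 𝔽 → Matrix (Fin n) (Fin n) 𝔽) (δ : 𝔽 → Fin n → 𝔽)
    (S : RawMul 𝔽 n) (hS : HasCommRule S σ δ)
    (Ω : Set (Fin n → 𝔽)) (hfg : FinGen S Ω)
    (B₁ B₂ : Set (Fin n → 𝔽)) (h₁ : IsPBasis S B₁ Ω) (h₂ : IsPBasis S B₂ Ω) :
    B₁.Finite ∧ B₂.Finite ∧ B₁.ncard = B₂.ncard := by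
  obtain ⟨G, hG, -, rfl⟩ := hfg
  obtain ⟨hB₁Ω, hB₁, hB₁cl⟩ := h₁
  obtain ⟨hB₂Ω, hB₂, hB₂cl⟩ := h₂
  have hfin₁ := hB₁.finite hS hG hB₁Ω
  have hfin₂ := hB₂.finite hS hG hB₂Ω
  refine ⟨hfin₁, hfin₂, le_antisymm ?_ ?_⟩
  · exact hB₁.ncard_le hS hfin₂ (hB₂cl ▸ hB₁Ω)
  · exact hB₂.ncard_le hS hfin₁ (hB₁cl ▸ hB₂Ω)

/-- Any two P-bases of a finitely generated P-closed set are finite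
and have the same number of elements. -/
theorem stmt14 {𝔽 : Type*} [DivisionRing 𝔽] {n : ℕ} (hn : 0 < n)
    (σ : 𝔽 → Matrix (Fin n) (Fin n) 𝔽) (δ : 𝔽 → Fin n → 𝔽)
    (hσ : IsMatrixMorphism σ) (hδ : IsVectorDerivation σ δ)
    (S : RawMul 𝔽 n) (hS : HasCommRule S σ δ)
    (Ω : Set (Fin n → 𝔽)) (hΩ : IsPClosed S Ω) (hfg : FinGen S Ω)
    (B₁ B₂ : Set (Fin n → 𝔽)) (h₁ : IsPBasis S B₁ Ω) (h₂ : IsPBasis S B₂ Ω) :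
    B₁.Finite ∧ B₂.Finite ∧ B₁.ncard = B₂.ncard :=
  stmt14_general σ δ S hS Ω hfg B₁ B₂ h₁ h₂
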